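/- Let n ≥ 2, let λ be a nonzero complex number with α := λ^n ≠ 1, and let A, B : ℂ → M_n(ℂ) be maps analytic in a neighborhood of 0 such that: (i) for all t near 0, A(t)_{1,j} = 0 and A(t)_{i,1} = 0 for all 2 ≤ i, j ≤ n (A(t) is block diagonal); (ii) A(0) = λ^{−1}·diag(α, J_{n−1}); (iii) B(0) = λ^{−1} times the block matrix with (1,1)-entry α, first-row tail b = (b_1, …, b_{n−1}) with b_1 ≠ 0, lower-right block J_{n−1}, and zeros in the rest of the first column; (iv) the derivative at 0 of the entry function t ↦ B(t)_{n,1} is nonzero. Then there exists ε > 0 such that for all t with 0 < |t| < ε, the ℂ-subalgebra of M_n(ℂ) generated by A(t) and B(t) equals all of M_n(ℂ). -/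

import Mathlib

/-!
After multiplying by `λ`, `A(0) = diag(α, J)` and `B(0)` has first row `(α, b)` and first column
`(α, 0)`. A pair `A = diag(a, A₂)`, `B = [[*, r], [c, *]]` generates the full matrix algebra as
soon as `a` is not an eigenvalue of `A₂` and `c`, `r` are cyclic vectors of `A₂`, `A₂ᵀ`:
`χ_{A₂}(A) / χ_{A₂}(a)` is the idempotent `E₁₁`, compressing `B` by it isolates `r` and `c`, and
the products `A^i (c rᵀ) A^j` span the lower-right block. Cyclicity of `c` means that the Krylov
matrix `[c, A₂c, …, A₂^(m-1) c]` is invertible, an open condition in `t`. At `t = 0` the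
eigenvalue condition is `α ≠ 1`, and `b` is cyclic for `Jᵀ` because `b₁ ≠ 0`. The column `c(t)`
vanishes at `0`, but `c(t) / t → c'(0)`, whose last entry is nonzero, so it is cyclic for `J`.
Hence all three conditions hold for small `t ≠ 0`.
-/

open Matrix

noncomputable section

/-- Generalized binomial coefficient C(m,k) for m : ℤ, as a complex number. -/
def gbinom (m : ℤ) (k : ℕ) : ℂ :=
  (∏ i ∈ Finset.range k, ((m : ℂ) - i)) / (Nat.factorial k)

/-- The n×n nilpotent Jordan matrix N. -/
def Nmat (n : ℕ) : Matrix (Fin n) (Fin n) ℂ :=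
  Matrix.of fun i j => if (i : ℕ) + 1 = (j : ℕ) then 1 else 0

/-- The unipotent Jordan block J = I + N. -/
def Jmat (n : ℕ) : Matrix (Fin n) (Fin n) ℂ := 1 + Nmat n

lemma Jmat_blockTriangular (n : ℕ) : (Jmat n).BlockTriangular id := by
  intro i j hij
  have hji : (j : ℕ) < (i : ℕ) := hij
  simp only [Jmat, Matrix.add_apply, Matrix.one_apply, Nmat, Matrix.of_apply]
  rw [if_neg (by intro h; subst h; exact lt_irrefl _ hji), if_neg (by omega)]
  simp

lemma Jmat_isUnit (n : ℕ) : IsUnit (Jmat n) := by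
  rw [Matrix.isUnit_iff_isUnit_det,
    Matrix.det_of_upperTriangular (Jmat_blockTriangular n)]
  have : ∀ i : Fin n, Jmat n i i = 1 := by
    intro i
    simp [Jmat, Matrix.one_apply, Nmat]
  simp [this]

/-- Integer powers (positive and negative) of the unipotent Jordan block. -/
def Jz (n : ℕ) (m : ℤ) : Matrix (Fin n) (Fin n) ℂ :=
  (((Jmat_isUnit n).unit ^ m : (Matrix (Fin n) (Fin n) ℂ)ˣ) : Matrix (Fin n) (Fin n) ℂ)

lemma Algebra.adjoin_pair_eq_top_of_smul {R A : Type*} [CommSemiring R] [Semiring A] [Algebra R A]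
    {x y : A} (s : R) (h : Algebra.adjoin R {s • x, s • y} = ⊤) : Algebra.adjoin R {x, y} = ⊤ :=
  top_unique <| h ▸ Algebra.adjoin_le (Set.insert_subset_iff.2
    ⟨Subalgebra.smul_mem _ (subset_adjoin (by simp)) s,
      Set.singleton_subset_iff.2 (Subalgebra.smul_mem _ (subset_adjoin (by simp)) s)⟩)

namespace Matrix

section CommRing

variable {K : Type*} [CommRing K] {m : ℕ}

def krylov (M : Matrix (Fin m) (Fin m) K) (v : Fin m → K) : Matrix (Fin m) (Fin m) K :=
  of fun p i => (M ^ (i : ℕ) *ᵥ v) p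

lemma krylov_smul_right (M : Matrix (Fin m) (Fin m) K) (s : K) (v : Fin m → K) :
    krylov M (s • v) = s • krylov M v := by
  ext p i
  simp [krylov, mulVec_smul]

lemma krylov_zero_right (M : Matrix (Fin m) (Fin m) K) : krylov M 0 = 0 := by
  ext; simp [krylov]

def pascal (m : ℕ) : Matrix (Fin m) (Fin m) K :=
  of fun k i => ((i : ℕ).choose k : K)

lemma det_pascal : (pascal m : Matrix (Fin m) (Fin m) K).det = 1 := by
  rw [det_of_isUpperTriangular fun k i hik => by
    simp [pascal, Nat.choose_eq_zero_of_lt (show (i : ℕ) < k from hik)]]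
  simp [pascal]

lemma krylov_one_add (M : Matrix (Fin m) (Fin m) K) (v : Fin m → K) :
    krylov (1 + M) v = krylov M v * pascal m := by
  ext p i
  have hpow : (1 + M) ^ (i : ℕ) = ∑ k ∈ Finset.range m, ((i : ℕ).choose k : K) • M ^ k := by
    rw [add_comm, (Commute.one_right M).add_pow]
    refine (Finset.sum_congr rfl fun k _ => ?_).trans
      (Finset.sum_subset (Finset.range_subset_range.2 (by omega)) fun k _ hk => ?_)
    · rw [one_pow, mul_one, ← Nat.cast_comm, ← nsmul_eq_mul, Nat.cast_smul_eq_nsmul]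
    · rw [Nat.choose_eq_zero_of_lt (by simpa using hk), Nat.cast_zero, zero_smul]
  simp only [krylov, of_apply, mul_apply, pascal, hpow, sum_mulVec, smul_mulVec,
    Finset.sum_apply, Pi.smul_apply, smul_eq_mul, Finset.sum_range (fun k => _ * _)]
  exact Finset.sum_congr rfl fun k _ => mul_comm _ _

lemma det_krylov_one_add (M : Matrix (Fin m) (Fin m) K) (v : Fin m → K) :
    (krylov (1 + M) v).det = (krylov M v).det := by
  rw [krylov_one_add, det_mul, det_pascal, mul_one]

lemma mul_mul_transpose_eq_sum_vecMulVec {ι κ ν : Type*}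
    [Fintype ι] [Fintype κ] (P : Matrix ν ι K) (G : Matrix ι κ K) (Q : Matrix ν κ K) :
    P * G * Qᵀ = ∑ i, ∑ j, G i j • vecMulVec (fun p => P p i) (fun q => Q q j) := by
  ext p q
  simp only [mul_apply, transpose_apply, sum_apply, smul_apply, vecMulVec_apply,
    smul_eq_mul, Finset.sum_mul]
  rw [Finset.sum_comm]
  exact Finset.sum_congr rfl fun i _ => Finset.sum_congr rfl fun j _ => by ring

lemma span_vecMulVec_krylov_eq_top {M : Matrix (Fin m) (Fin m) K} {c r : Fin m → K}
    (hc : IsUnit (krylov M c).det) (hr : IsUnit (krylov Mᵀ r).det) :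
    Submodule.span K (Set.range fun ij : Fin m × Fin m =>
      vecMulVec (M ^ (ij.1 : ℕ) *ᵥ c) (r ᵥ* M ^ (ij.2 : ℕ))) = ⊤ := by
  refine Submodule.eq_top_iff'.2 fun Z => ?_
  have hZ : Z = krylov M c * ((krylov M c)⁻¹ * (Z * (krylov Mᵀ r)ᵀ⁻¹)) * (krylov Mᵀ r)ᵀ := by
    rw [mul_nonsing_inv_cancel_left _ _ hc, nonsing_inv_mul_cancel_right _ _
      (by rwa [det_transpose])]
  rw [hZ, mul_mul_transpose_eq_sum_vecMulVec]
  refine Submodule.sum_mem _ fun i _ => Submodule.sum_mem _ fun j _ =>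
    Submodule.smul_mem _ _ (Submodule.subset_span ⟨(i, j), ?_⟩)
  ext p q
  simp [krylov, ← transpose_pow, mulVec_transpose]

open Polynomial in
lemma aeval_fromBlocks_zero_zero {ι κ : Type*} [Fintype ι] [Fintype κ] [DecidableEq ι]
    [DecidableEq κ] (A₁ : Matrix ι ι K) (A₂ : Matrix κ κ K) (p : K[X]) :
    aeval (fromBlocks A₁ 0 0 A₂) p = fromBlocks (aeval A₁ p) 0 0 (aeval A₂ p) := by
  induction p using Polynomial.induction_on' with
  | add p q hp hq => simp [hp, hq, fromBlocks_add]
  | monomial k a =>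
    simp [aeval_monomial, fromBlocks_diagonal_pow, ← Algebra.smul_def, fromBlocks_smul]

lemma continuous_det_krylov {R : Type*} [CommRing R] [TopologicalSpace R] [IsTopologicalRing R] :
    Continuous fun p : Matrix (Fin m) (Fin m) R × (Fin m → R) => (krylov p.1 p.2).det := by
  unfold krylov
  fun_prop

lemma eq_fromBlocks_scalar_of_block_diag {R : Type*} [Semiring R]
    {M : Matrix (Fin 1 ⊕ Fin m) (Fin 1 ⊕ Fin m) R}
    (h₁₂ : ∀ j, M (.inl 0) (.inr j) = 0) (h₂₁ : ∀ i, M (.inr i) (.inl 0) = 0) :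
    M = fromBlocks (scalar (Fin 1) (M (.inl 0) (.inl 0))) 0 0 M.toBlocks₂₂ := by
  ext (i | i) (j | j) <;> simp [Fin.fin_one_eq_zero, h₁₂, h₂₁, toBlocks₂₂]

lemma eq_fromBlocks_replicateRow_replicateCol {R : Type*}
    (M : Matrix (Fin 1 ⊕ Fin m) (Fin 1 ⊕ Fin m) R) :
    M = fromBlocks M.toBlocks₁₁ (replicateRow (Fin 1) fun j => M (.inl 0) (.inr j))
      (replicateCol (Fin 1) fun i => M (.inr i) (.inl 0)) M.toBlocks₂₂ := by
  ext (i | i) (j | j) <;> simp [Fin.fin_one_eq_zero, toBlocks₁₁, toBlocks₂₂]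

end CommRing

section Field

variable {K : Type*} [Field K] {m : ℕ}

lemma fromBlocks_one_zero_zero_zero_mem_adjoin {ι κ : Type*} [Fintype ι] [Fintype κ]
    [DecidableEq ι] [DecidableEq κ] {a : K} {A₂ : Matrix κ κ K} (ha : A₂.charpoly.eval a ≠ 0) :
    fromBlocks (1 : Matrix ι ι K) 0 0 0 ∈ Algebra.adjoin K {fromBlocks (scalar ι a) 0 0 A₂} := by
  -- Cayley–Hamilton: `χ_{A₂}` kills the lower block of `χ_{A₂}(A)`
  have hP : fromBlocks (1 : Matrix ι ι K) 0 0 0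
      = (A₂.charpoly.eval a)⁻¹ • Polynomial.aeval (fromBlocks (scalar ι a) 0 0 A₂) A₂.charpoly := by
    rw [aeval_fromBlocks_zero_zero, aeval_self_charpoly,
      show scalar ι a = algebraMap K _ a from rfl,
      Polynomial.aeval_algebraMap_apply_eq_algebraMap_eval, fromBlocks_smul,
      Algebra.algebraMap_eq_smul_one, smul_smul, inv_mul_cancel₀ ha]
    simp
  rw [hP]
  exact Subalgebra.smul_mem _ (Polynomial.aeval_mem_adjoin_singleton K _) _

variable {S : Subalgebra K (Matrix (Fin 1 ⊕ Fin m) (Fin 1 ⊕ Fin m) K)}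

lemma fromBlocks₂₂_mem {A₁ : Matrix (Fin 1) (Fin 1) K}
    {A₂ : Matrix (Fin m) (Fin m) K} {r c : Fin m → K} (hA : fromBlocks A₁ 0 0 A₂ ∈ S)
    (hrow : fromBlocks 0 (replicateRow (Fin 1) r) 0 0 ∈ S)
    (hcol : fromBlocks 0 0 (replicateCol (Fin 1) c) 0 ∈ S)
    (hc : (krylov A₂ c).det ≠ 0) (hr : (krylov A₂ᵀ r).det ≠ 0) (Z : Matrix (Fin m) (Fin m) K) :
    fromBlocks 0 0 0 Z ∈ S := by
  have hcr : replicateCol (Fin 1) c * replicateRow (Fin 1) r = vecMulVec c r := by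
    ext; simp [mul_apply, vecMulVec_apply]
  have hword (i j : ℕ) : fromBlocks 0 0 0 (vecMulVec (A₂ ^ i *ᵥ c) (r ᵥ* A₂ ^ j)) ∈ S := by
    have : fromBlocks A₁ 0 0 A₂ ^ i * fromBlocks 0 0 (replicateCol (Fin 1) c) 0
        * fromBlocks 0 (replicateRow (Fin 1) r) 0 0 * fromBlocks A₁ 0 0 A₂ ^ j
        = fromBlocks 0 0 0 (vecMulVec (A₂ ^ i *ᵥ c) (r ᵥ* A₂ ^ j)) := by
      simp only [fromBlocks_diagonal_pow, fromBlocks_multiply, Matrix.zero_mul, Matrix.mul_zero,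
        add_zero, zero_add, ← mul_vecMulVec, ← vecMulVec_mul, ← hcr, Matrix.mul_assoc]
    exact this ▸ S.mul_mem (S.mul_mem (S.mul_mem (S.pow_mem hA i) hcol) hrow) (S.pow_mem hA j)
  have hZ : Z ∈ Submodule.span K _ := (span_vecMulVec_krylov_eq_top hc.isUnit hr.isUnit).symm ▸
    Submodule.mem_top
  induction hZ using Submodule.span_induction with
  | mem x hx => obtain ⟨⟨i, j⟩, rfl⟩ := hx; exact hword i j
  | zero => simp
  | add x y _ _ hx hy => simpa [fromBlocks_add] using S.add_mem hx hy
  | smul a x _ hx => simpa [fromBlocks_smul] using S.smul_mem hx a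

lemma fromBlocks₁₂_mem (h₂₂ : ∀ Z, fromBlocks 0 0 0 Z ∈ S) {r : Fin m → K} (hr₀ : r ≠ 0)
    (hrow : fromBlocks 0 (replicateRow (Fin 1) r) 0 0 ∈ S) (R : Matrix (Fin 1) (Fin m) K) :
    fromBlocks 0 R 0 0 ∈ S := by
  obtain ⟨k, hk⟩ : ∃ k, r k ≠ 0 := Function.ne_iff.1 hr₀
  have : (fromBlocks 0 (replicateRow (Fin 1) r) 0 0 :
      Matrix (Fin 1 ⊕ Fin m) (Fin 1 ⊕ Fin m) K)
      * fromBlocks 0 0 0 (vecMulVec (Pi.single k (r k)⁻¹) (R 0)) = fromBlocks 0 R 0 0 := by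
    simp only [fromBlocks_multiply, Matrix.zero_mul, Matrix.mul_zero, add_zero]
    congr
    ext i j
    simp [mul_apply, vecMulVec_apply, Pi.single_apply, hk, Subsingleton.elim i 0]
  exact this ▸ S.mul_mem hrow (h₂₂ _)

lemma fromBlocks₂₁_mem (h₂₂ : ∀ Z, fromBlocks 0 0 0 Z ∈ S) {c : Fin m → K} (hc₀ : c ≠ 0)
    (hcol : fromBlocks 0 0 (replicateCol (Fin 1) c) 0 ∈ S) (C : Matrix (Fin m) (Fin 1) K) :
    fromBlocks 0 0 C 0 ∈ S := by
  obtain ⟨k, hk⟩ : ∃ k, c k ≠ 0 := Function.ne_iff.1 hc₀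
  have : (fromBlocks 0 0 0 (vecMulVec (fun i => C i 0) (Pi.single k (c k)⁻¹)) :
      Matrix (Fin 1 ⊕ Fin m) (Fin 1 ⊕ Fin m) K) * fromBlocks 0 0 (replicateCol (Fin 1) c) 0
      = fromBlocks 0 0 C 0 := by
    simp only [fromBlocks_multiply, Matrix.zero_mul, Matrix.mul_zero, add_zero, zero_add]
    congr
    ext i j
    simp [mul_apply, vecMulVec_apply, Pi.single_apply, hk, Subsingleton.elim j 0]
  exact this ▸ S.mul_mem (h₂₂ _) hcol

theorem adjoin_fromBlocks_eq_top [NeZero m] {a : K} {A₂ : Matrix (Fin m) (Fin m) K}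
    {r c : Fin m → K} (B₁₁ : Matrix (Fin 1) (Fin 1) K) (B₂₂ : Matrix (Fin m) (Fin m) K)
    (ha : A₂.charpoly.eval a ≠ 0) (hc : (krylov A₂ c).det ≠ 0) (hr : (krylov A₂ᵀ r).det ≠ 0) :
    Algebra.adjoin K {fromBlocks (scalar (Fin 1) a) 0 0 A₂,
      fromBlocks B₁₁ (replicateRow (Fin 1) r) (replicateCol (Fin 1) c) B₂₂} = ⊤ := by
  set S := Algebra.adjoin K {fromBlocks (scalar (Fin 1) a) 0 0 A₂,
    fromBlocks B₁₁ (replicateRow (Fin 1) r) (replicateCol (Fin 1) c) B₂₂}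
  have hA : fromBlocks (scalar (Fin 1) a) 0 0 A₂ ∈ S := Algebra.subset_adjoin (by simp)
  have hB : fromBlocks B₁₁ (replicateRow (Fin 1) r) (replicateCol (Fin 1) c) B₂₂ ∈ S :=
    Algebra.subset_adjoin (by simp)
  have hP : fromBlocks 1 0 0 0 ∈ S := Algebra.adjoin_mono (by simp)
    (fromBlocks_one_zero_zero_zero_mem_adjoin ha)
  have hQ : fromBlocks 0 0 0 1 ∈ S := by
    simpa [← fromBlocks_one, sub_eq_add_neg, fromBlocks_neg, fromBlocks_add] using
      S.sub_mem S.one_mem hP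
  have hrow : fromBlocks 0 (replicateRow (Fin 1) r) 0 0 ∈ S := by
    simpa [fromBlocks_multiply] using S.mul_mem (S.mul_mem hP hB) hQ
  have hcol : fromBlocks 0 0 (replicateCol (Fin 1) c) 0 ∈ S := by
    simpa [fromBlocks_multiply] using S.mul_mem (S.mul_mem hQ hB) hP
  have h₂₂ := fromBlocks₂₂_mem hA hrow hcol hc hr
  have hr₀ : r ≠ 0 := by rintro rfl; simp [krylov_zero_right] at hr
  have hc₀ : c ≠ 0 := by rintro rfl; simp [krylov_zero_right] at hc
  refine eq_top_iff.2 fun M _ => ?_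
  have hM : M = M (Sum.inl 0) (Sum.inl 0) • fromBlocks 1 0 0 0 + fromBlocks 0 M.toBlocks₁₂ 0 0
      + fromBlocks 0 0 M.toBlocks₂₁ 0 + fromBlocks 0 0 0 M.toBlocks₂₂ := by
    conv_lhs => rw [← fromBlocks_toBlocks M]
    simp only [fromBlocks_smul, fromBlocks_add, smul_zero, add_zero, zero_add]
    congr
    ext i j
    simp [Subsingleton.elim i 0, Subsingleton.elim j 0, toBlocks₁₁]
  rw [hM]
  exact S.add_mem (S.add_mem (S.add_mem (S.smul_mem hP _) (fromBlocks₁₂_mem h₂₂ hr₀ hrow _))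
    (fromBlocks₂₁_mem h₂₂ hc₀ hcol _)) (h₂₂ _)

end Field

end Matrix

lemma Nmat_mulVec {m : ℕ} (v : Fin m → ℂ) (p : Fin m) :
    (Nmat m *ᵥ v) p = if h : (p : ℕ) + 1 < m then v ⟨p + 1, h⟩ else 0 := by
  simp only [mulVec, dotProduct, Nmat, of_apply, ite_mul, one_mul, zero_mul]
  split_ifs with h
  · have key : ∀ i : Fin m, ((p : ℕ) + 1 = i ↔ i = ⟨p + 1, h⟩) := fun i => by
      simp only [Fin.ext_iff]; omega
    simp [key]
  · exact Finset.sum_eq_zero fun i _ => if_neg (by omega)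

lemma Nmat_pow_mulVec {m : ℕ} (k : ℕ) (v : Fin m → ℂ) (p : Fin m) :
    (Nmat m ^ k *ᵥ v) p = if h : (p : ℕ) + k < m then v ⟨p + k, h⟩ else 0 := by
  induction k generalizing v with
  | zero => simp
  | succ k ih =>
    simp only [pow_succ, ← mulVec_mulVec, ih, Nmat_mulVec]
    split_ifs <;> first | rfl | omega

lemma Nmat_transpose_mulVec {m : ℕ} (v : Fin m → ℂ) (p : Fin m) :
    ((Nmat m)ᵀ *ᵥ v) p = if h : 1 ≤ (p : ℕ) then v ⟨p - 1, by omega⟩ else 0 := by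
  simp only [mulVec, dotProduct, transpose_apply, Nmat, of_apply, ite_mul, one_mul, zero_mul]
  split_ifs with h
  · have key : ∀ i : Fin m, ((i : ℕ) + 1 = p ↔ i = ⟨p - 1, by omega⟩) := fun i => by
      simp only [Fin.ext_iff]; omega
    simp [key]
  · exact Finset.sum_eq_zero fun i _ => if_neg (by omega)

lemma Nmat_transpose_pow_mulVec {m : ℕ} (k : ℕ) (v : Fin m → ℂ) (p : Fin m) :
    ((Nmat m)ᵀ ^ k *ᵥ v) p = if h : k ≤ (p : ℕ) then v ⟨p - k, by omega⟩ else 0 := by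
  induction k generalizing v with
  | zero => simp
  | succ k ih =>
    simp only [pow_succ, ← mulVec_mulVec, ih, Nmat_transpose_mulVec]
    split_ifs <;> first | rfl | omega

lemma det_krylov_Nmat_ne_zero {m : ℕ} {v : Fin m → ℂ} {i : Fin m} (hi : (i : ℕ) + 1 = m)
    (hv : v i ≠ 0) : (krylov (Nmat m) v).det ≠ 0 := by
  -- with its columns reversed, the Krylov matrix of the shift is triangular with diagonal `v i`
  have htri : ((krylov (Nmat m) v).submatrix id Fin.revPerm).IsUpperTriangular :=
    fun p q hqp => by
      have : (q : ℕ) < p := hqp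
      simp [krylov, Nmat_pow_mulVec]
      omega
  have hdet := det_permute' Fin.revPerm (krylov (Nmat m) v)
  rw [det_of_isUpperTriangular htri] at hdet
  intro h0
  rw [h0, mul_zero, Finset.prod_eq_zero_iff] at hdet
  obtain ⟨p, -, hp⟩ := hdet
  simp [krylov, Nmat_pow_mulVec] at hp
  exact hv (by convert hp (by omega) using 2; ext; simp only; omega)

lemma det_krylov_Nmat_transpose_ne_zero {m : ℕ} {v : Fin m → ℂ} {i : Fin m} (hi : (i : ℕ) = 0)
    (hv : v i ≠ 0) : (krylov (Nmat m)ᵀ v).det ≠ 0 := by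
  have htri : (krylov (Nmat m)ᵀ v).IsLowerTriangular := fun p k hpk => by
    have : (p : ℕ) < k := hpk
    simp [krylov, Nmat_transpose_pow_mulVec]
    omega
  rw [det_of_isLowerTriangular _ htri]
  refine Finset.prod_ne_zero_iff.2 fun p _ => ?_
  simpa [krylov, Nmat_transpose_pow_mulVec, show (⟨0, _⟩ : Fin m) = i from Fin.ext hi.symm]

lemma det_krylov_Jmat_ne_zero {m : ℕ} {v : Fin m → ℂ} {i : Fin m} (hi : (i : ℕ) + 1 = m)
    (hv : v i ≠ 0) : (krylov (Jmat m) v).det ≠ 0 := by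
  rw [Jmat, det_krylov_one_add]
  exact det_krylov_Nmat_ne_zero hi hv

lemma det_krylov_Jmat_transpose_ne_zero {m : ℕ} {v : Fin m → ℂ} {i : Fin m} (hi : (i : ℕ) = 0)
    (hv : v i ≠ 0) : (krylov (Jmat m)ᵀ v).det ≠ 0 := by
  rw [Jmat, transpose_add, transpose_one, det_krylov_one_add]
  exact det_krylov_Nmat_transpose_ne_zero hi hv

lemma eval_charpoly_Jmat (m : ℕ) (a : ℂ) : (Jmat m).charpoly.eval a = (a - 1) ^ m := by
  rw [charpoly_of_isUpperTriangular _ (Jmat_blockTriangular m)]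
  simp [Jmat, Nmat]

open Filter Topology in
theorem eventually_adjoin_eq_top {𝕜 : Type*} [NontriviallyNormedField 𝕜] {m : ℕ} [NeZero m]
    {A B : 𝕜 → Matrix (Fin 1 ⊕ Fin m) (Fin 1 ⊕ Fin m) 𝕜}
    (hA : ∀ i j, ContinuousAt (fun t => A t i j) 0)
    (hB : ∀ i j, DifferentiableAt 𝕜 (fun t => B t i j) 0)
    (hAblock : ∀ᶠ t in 𝓝 0,
      (∀ j, A t (.inl 0) (.inr j) = 0) ∧ ∀ i, A t (.inr i) (.inl 0) = 0)
    (hB₀ : ∀ i, B 0 (.inr i) (.inl 0) = 0)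
    (ha : (A 0).toBlocks₂₂.charpoly.eval (A 0 (.inl 0) (.inl 0)) ≠ 0)
    (hc : (krylov (A 0).toBlocks₂₂ fun i => deriv (fun t => B t (.inr i) (.inl 0)) 0).det ≠ 0)
    (hr : (krylov (A 0).toBlocks₂₂ᵀ fun j => B 0 (.inl 0) (.inr j)).det ≠ 0) :
    ∀ᶠ t in 𝓝[≠] 0, Algebra.adjoin 𝕜 {A t, B t} = ⊤ := by
  have hA₂ : ContinuousAt (fun t => (A t).toBlocks₂₂) 0 :=
    continuousAt_pi.2 fun i => continuousAt_pi.2 fun j => hA _ _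
  have hrow : ContinuousAt (fun t j => B t (.inl 0) (.inr j)) 0 :=
    continuousAt_pi.2 fun j => (hB _ _).continuousAt
  -- the first column of `B t` vanishes at `t = 0`, so it is `t • d t` with `d` continuous
  set d : 𝕜 → Fin m → 𝕜 := fun t i => dslope (fun s => B s (.inr i) (.inl 0)) 0 t
  have hd : ContinuousAt d 0 := continuousAt_pi.2 fun i => continuousAt_dslope_same.2 (hB _ _)
  have hcol (t : 𝕜) : (fun i => B t (.inr i) (.inl 0)) = t • d t := by
    ext i
    simpa [hB₀] using (sub_smul_dslope (fun s => B s (.inr i) (.inl 0)) 0 t).symm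
  have ha' : ContinuousAt (fun t => (A t).toBlocks₂₂.charpoly.eval (A t (.inl 0) (.inl 0))) 0 := by
    simp only [eval_charpoly, scalar_apply, toBlocks₂₂]
    fun_prop
  have hc' : ContinuousAt (fun t => (krylov (A t).toBlocks₂₂ (d t)).det) 0 :=
    (continuous_det_krylov.continuousAt.comp (f := fun t => ((A t).toBlocks₂₂, d t))
      (hA₂.prodMk hd) :)
  have hr' :
      ContinuousAt (fun t => (krylov (A t).toBlocks₂₂ᵀ fun j => B t (.inl 0) (.inr j)).det) 0 :=
    (continuous_det_krylov.continuousAt.comp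
      (f := fun t => ((A t).toBlocks₂₂ᵀ, fun j => B t (.inl 0) (.inr j)))
      ((continuous_id.matrix_transpose.continuousAt.comp hA₂).prodMk hrow) :)
  filter_upwards [nhdsWithin_le_nhds (hAblock.and ((ha'.eventually_ne ha).and
    ((hc'.eventually_ne (by simpa [d] using hc)).and (hr'.eventually_ne hr)))),
    self_mem_nhdsWithin] with t ⟨⟨h₁₂, h₂₁⟩, hat, hct, hrt⟩ (ht : t ≠ 0)
  rw [eq_fromBlocks_scalar_of_block_diag h₁₂ h₂₁, eq_fromBlocks_replicateRow_replicateCol (B t),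
    hcol]
  refine adjoin_fromBlocks_eq_top _ _ hat ?_ hrt
  rw [krylov_smul_right, det_smul]
  exact mul_ne_zero (pow_ne_zero _ ht) hct

/-- Burnside-type lemma: if `A(t)` is an analytic family of block-diagonal matrices
with `A(0) = λ^{−1}·diag(α, J_{n−1})`, `α = λ^n ≠ 1`, and `B(t)` is an analytic family
with `B(0) = λ^{−1}` times the block matrix with first-row tail `b` (`b_1 ≠ 0`),
lower-right block `J_{n−1}` and zero first-column tail, and if the derivative at 0 of
the bottom-left entry `t ↦ B(t)_{n,1}` is nonzero, then for all sufficiently small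
`t ≠ 0` the matrices `A(t)` and `B(t)` generate the full matrix algebra `M_n(ℂ)`. -/
theorem stmt16 (n : ℕ) (hn : 2 ≤ n) (lam : ℂ) (hlam : lam ≠ 0) (halpha : lam ^ n ≠ 1)
    (A B : ℂ → Matrix (Fin 1 ⊕ Fin (n - 1)) (Fin 1 ⊕ Fin (n - 1)) ℂ)
    (hAanalytic : ∀ i j, AnalyticAt ℂ (fun t => A t i j) 0)
    (hBanalytic : ∀ i j, AnalyticAt ℂ (fun t => B t i j) 0)
    (hAblock : ∀ᶠ t in nhds (0 : ℂ),
      (∀ j : Fin (n - 1), A t (Sum.inl 0) (Sum.inr j) = 0)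
      ∧ (∀ i : Fin (n - 1), A t (Sum.inr i) (Sum.inl 0) = 0))
    (hA0 : A 0 = lam⁻¹ • Matrix.fromBlocks (Matrix.of fun _ _ => lam ^ n) 0 0
      (Jmat (n - 1)))
    (b : Fin (n - 1) → ℂ) (hb : b ⟨0, by omega⟩ ≠ 0)
    (hB0 : B 0 = lam⁻¹ • Matrix.fromBlocks (Matrix.of fun _ _ => lam ^ n)
      (Matrix.of fun _ j => b j) 0 (Jmat (n - 1)))
    (hderiv : deriv (fun t => B t (Sum.inr (⟨n - 2, by omega⟩ : Fin (n - 1)))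
      (Sum.inl 0)) 0 ≠ 0) :
    ∃ ε > (0 : ℝ), ∀ t : ℂ, t ≠ 0 → ‖t‖ < ε →
      Algebra.adjoin ℂ
        ({A t, B t} : Set (Matrix (Fin 1 ⊕ Fin (n - 1)) (Fin 1 ⊕ Fin (n - 1)) ℂ)) = ⊤ := by
  have : NeZero (n - 1) := ⟨by omega⟩
  have hA0' : lam • A 0 = fromBlocks (of fun _ _ => lam ^ n) 0 0 (Jmat (n - 1)) := by
    rw [hA0, smul_inv_smul₀ hlam]
  have hB0' : lam • B 0 = fromBlocks (of fun _ _ => lam ^ n) (of fun _ j => b j) 0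
      (Jmat (n - 1)) := by
    rw [hB0, smul_inv_smul₀ hlam]
  have hscaled := eventually_adjoin_eq_top (A := fun t => lam • A t) (B := fun t => lam • B t)
    (fun i j => (hAanalytic i j).continuousAt.const_smul lam)
    (fun i j => (hBanalytic i j).differentiableAt.const_smul lam)
    (hAblock.mono fun t h => ⟨fun j => by simp [h.1 j], fun i => by simp [h.2 i]⟩)
    (fun i => by simp only [hB0']; rfl)
    (by
      simp only [hA0', toBlocks_fromBlocks₂₂, eval_charpoly_Jmat]
      exact pow_ne_zero (n - 1) (sub_ne_zero.2 halpha))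
    (by
      simp only [hA0', toBlocks_fromBlocks₂₂]
      refine det_krylov_Jmat_ne_zero (i := ⟨n - 2, by omega⟩) (by simp only; omega) ?_
      simpa [deriv_const_mul lam (hBanalytic _ _).differentiableAt] using ⟨hlam, hderiv⟩)
    (by
      simp only [hA0', hB0', toBlocks_fromBlocks₂₂]
      exact det_krylov_Jmat_transpose_ne_zero (i := ⟨0, by omega⟩) rfl hb)
  obtain ⟨ε, hε, hball⟩ := Metric.eventually_nhds_iff.1 (eventually_nhdsWithin_iff.1 hscaled)
  exact ⟨ε, hε, fun t ht htε =>
    Algebra.adjoin_pair_eq_top_of_smul lam (hball (by simpa using htε) ht)⟩
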